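/- (Return-time formula) Let w be a finite 0–1 word of length n containing exactly k ones, let l, m ≥ 0 be integers, let x' ∈ X, and set x = w 0^l 1^m 1 0 x' ∈ X. Then the least integer j ≥ 1 such that (T^j x)_i = w_i for all i < n (i.e., the first return time of x to the cylinder determined by w) equals C(n+l, k) + C(n+m, k+m) − C(n, k). -/

import Mathlib

/-- Concatenation of a finite word `w` with an infinite tail `x`. -/
def cat (w : List Bool) (x : ℕ → Bool) : ℕ → Bool :=
  fun i => if h : i < w.length then w.get ⟨i, h⟩ else x (i - w.length)

/-- `T` satisfies the Pascal adic law: `T(0ⁿ1ᵐ10x') = 1ᵐ0ⁿ01x'`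
(here `0 = false`, `1 = true`). -/
def PascalLaw (T : (ℕ → Bool) → (ℕ → Bool)) : Prop :=
  ∀ (n m : ℕ) (x' : ℕ → Bool),
    T (cat (List.replicate n false ++ List.replicate m true ++ [true, false]) x')
      = cat (List.replicate m true ++ List.replicate n false ++ [false, true]) x'

namespace PF

abbrev wt (v : List Bool) : ℕ := v.count true

lemma pascal (n k : ℕ) :
    Nat.choose (n + 1) (k + 1) = Nat.choose n k + Nat.choose n (k + 1) :=
  Nat.choose_succ_succ n k

def rkO : List Bool → ℕ → ℕ → ℕ
  | [], _, _ => 0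
  | false :: t, N, K => rkO t N K
  | true :: t, N, K => Nat.choose (t.length + N) (wt t + K + 1) + rkO t N K

def rk (v : List Bool) : ℕ := rkO v.reverse 0 0

lemma wt_cons_true (t : List Bool) : wt (true :: t) = wt t + 1 := by simp [wt]
lemma wt_cons_false (t : List Bool) : wt (false :: t) = wt t := by simp [wt]
lemma wt_replicate_false (a : ℕ) : wt (List.replicate a false) = 0 := by
  simp [wt, List.count_replicate]
lemma wt_replicate_true (a : ℕ) : wt (List.replicate a true) = a := by
  simp [wt, List.count_replicate]
lemma wt_append (s t : List Bool) : wt (s ++ t) = wt s + wt t := by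
  simp [wt, List.count_append]

lemma rkO_append (t p : List Bool) (N K : ℕ) :
    rkO (t ++ p) N K = rkO t (p.length + N) (wt p + K) + rkO p N K := by
  induction t with
  | nil => simp [rkO]
  | cons c t ih =>
    cases c with
    | false => simpa [rkO] using ih
    | true =>
      show Nat.choose ((t ++ p).length + N) (wt (t ++ p) + K + 1) + rkO (t ++ p) N K = _
      rw [ih, List.length_append, wt_append, rkO]
      have e1 : t.length + p.length + N = t.length + (p.length + N) := by omega
      have e2 : wt t + wt p + K + 1 = wt t + (wt p + K) + 1 := by omega
      rw [e1, e2]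
      omega

lemma rkO_replicate_false (a : ℕ) (t : List Bool) (N K : ℕ) :
    rkO (List.replicate a false ++ t) N K = rkO t N K := by
  induction a with
  | zero => simp
  | succ a ih => simpa [List.replicate_succ, rkO] using ih

lemma rkO_block (c a N K : ℕ) :
    rkO (List.replicate c true ++ List.replicate a false) N K + Nat.choose (a + N) K
      = Nat.choose (a + c + N) (c + K) := by
  induction c with
  | zero =>
    have : rkO (List.replicate a false) N K = 0 := by
      simpa [rkO] using rkO_replicate_false a [] N K
    simp [this]
  | succ c ih =>
    have h1 : (List.replicate (c+1) true : List Bool) ++ List.replicate a false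
        = true :: (List.replicate c true ++ List.replicate a false) := by
      rw [List.replicate_succ, List.cons_append]
    rw [h1]
    have hw : wt (List.replicate c true ++ List.replicate a false) = c := by
      rw [wt_append, wt_replicate_true, wt_replicate_false]
      omega
    have hl : (List.replicate c true ++ List.replicate a false).length = c + a := by
      simp
    rw [rkO, hw, hl]
    have e : a + (c+1) + N = (a + c + N) + 1 := by omega
    have e3 : c + 1 + K = c + K + 1 := by omega
    rw [e, e3, pascal (a + c + N) (c + K)]
    have e2 : c + a + N = a + c + N := by omega
    rw [e2]
    omega

lemma choose_le_diag (x y d : ℕ) : Nat.choose x y ≤ Nat.choose (x + d) (y + d) := by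
  induction d with
  | zero => simp
  | succ d ih =>
    have h := pascal (x + d) (y + d)
    have e : x + (d+1) = (x + d) + 1 := by omega
    have e2 : y + (d+1) = (y + d) + 1 := by omega
    rw [e, e2]
    omega

lemma rkO_lb (t : List Bool) (N K : ℕ) :
    Nat.choose (wt t + N) (wt t + K) ≤ rkO t N K + Nat.choose N K := by
  induction t with
  | nil => simp [rkO, wt]
  | cons c t ih =>
    cases c with
    | false => simpa [rkO, wt_cons_false] using ih
    | true =>
      have hwl : wt t ≤ t.length := List.count_le_length
      have h1 : Nat.choose (wt t + N) (wt t + K + 1) ≤ Nat.choose (t.length + N) (wt t + K + 1) :=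
        Nat.choose_le_choose _ (by omega)
      have e : wt t + 1 + N = (wt t + N) + 1 := by omega
      have e2 : wt t + 1 + K = (wt t + K) + 1 := by omega
      rw [rkO, wt_cons_true, e, e2, pascal (wt t + N) (wt t + K)]
      omega

lemma rkO_ub (t : List Bool) (N K : ℕ) :
    rkO t N K + Nat.choose (t.length - wt t + N) K ≤ Nat.choose (t.length + N) (wt t + K) := by
  induction t with
  | nil => simp [rkO, wt]
  | cons c t ih =>
    have hwl : wt t ≤ t.length := List.count_le_length
    cases c with
    | false =>
      rw [rkO, wt_cons_false]
      have e : (false :: t).length - wt t + N = (t.length - wt t + N) + 1 := by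
        simp only [List.length_cons]; omega
      have e2 : (false :: t).length + N = (t.length + N) + 1 := by
        simp only [List.length_cons]; omega
      rw [e, e2]
      cases K with
      | zero =>
        simp only [Nat.choose_zero_right, Nat.add_zero]
        have h5 : Nat.choose (t.length + N) (wt t) ≤ Nat.choose (t.length + N + 1) (wt t) :=
          Nat.choose_le_choose _ (by omega)
        have h6 := ih
        simp only [Nat.choose_zero_right, Nat.add_zero] at h6
        omega
      | succ K' =>
        rw [pascal (t.length - wt t + N) K']
        have e3 : wt t + (K' + 1) = (wt t + K') + 1 := by omega
        rw [e3, pascal (t.length + N) (wt t + K')]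
        have hd : Nat.choose (t.length - wt t + N) K' ≤ Nat.choose (t.length + N) (wt t + K') := by
          have := choose_le_diag (t.length - wt t + N) K' (wt t)
          have e4 : t.length - wt t + N + wt t = t.length + N := by omega
          have e5 : K' + wt t = wt t + K' := by omega
          rwa [e4, e5] at this
        have hih := ih
        rw [e3] at hih
        omega
    | true =>
      rw [rkO, wt_cons_true]
      have e : (true :: t).length - (wt t + 1) + N = t.length - wt t + N := by
        simp only [List.length_cons]; omega
      have e2 : (true :: t).length + N = (t.length + N) + 1 := by
        simp only [List.length_cons]; omega
      have e3 : wt t + 1 + K = (wt t + K) + 1 := by omega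
      rw [e, e2, e3, pascal (t.length + N) (wt t + K)]
      omega

lemma rkO_bound (t : List Bool) : rkO t 0 0 + 1 ≤ Nat.choose t.length (wt t) := by
  have := rkO_ub t 0 0
  simpa using this

lemma rkO_inj : ∀ t s : List Bool, t.length = s.length → wt t = wt s →
    rkO t 0 0 = rkO s 0 0 → t = s := by
  have key : ∀ (u v : List Bool), u.length = v.length → wt u + 1 = wt v →
      rkO (true :: u) 0 0 = rkO (false :: v) 0 0 → False := by
    intro u v hluv hwuv hruv
    simp only [rkO, Nat.add_zero] at hruv
    have hb := rkO_bound v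
    have hc : Nat.choose v.length (wt v) = Nat.choose u.length (wt u + 1) := by
      rw [← hluv, ← hwuv]
    omega
  intro t
  induction t with
  | nil =>
    intro s hl _ _
    cases s with
    | nil => rfl
    | cons c s => simp at hl
  | cons c t ih =>
    intro s hl hw hr
    cases s with
    | nil => simp at hl
    | cons d s =>
      have hls : t.length = s.length := by simpa using hl
      cases c with
      | true =>
        cases d with
        | true =>
          have hwts : wt t = wt s := by
            rw [wt_cons_true, wt_cons_true] at hw; omega
          have hrts : rkO t 0 0 = rkO s 0 0 := by
            rw [rkO, rkO, hls, hwts] at hr; omega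
          rw [ih s hls hwts hrts]
        | false =>
          have hwts : wt t + 1 = wt s := by
            rw [wt_cons_true, wt_cons_false] at hw; omega
          exact (key t s hls hwts hr).elim
      | false =>
        cases d with
        | false =>
          have hwts : wt t = wt s := by
            rw [wt_cons_false, wt_cons_false] at hw; omega
          have hrts : rkO t 0 0 = rkO s 0 0 := by
            rw [rkO, rkO] at hr; exact hr
          rw [ih s hls hwts hrts]
        | true =>
          have hwts : wt s + 1 = wt t := by
            rw [wt_cons_false, wt_cons_true] at hw; omega
          exact (key s t hls.symm hwts hr.symm).elim

lemma rk_inj (u v : List Bool) (hl : u.length = v.length) (hw : wt u = wt v)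
    (hr : rk u = rk v) : u = v := by
  have h1 : u.reverse.length = v.reverse.length := by simpa using hl
  have h2 : wt u.reverse = wt v.reverse := by simpa [wt, List.count_reverse] using hw
  have := rkO_inj u.reverse v.reverse h1 h2 hr
  have := congrArg List.reverse this
  simpa using this

/-- Every word is either of the form `0^a 1^b` or has a first descent. -/
lemma decomp (v : List Bool) :
    (∃ a b, v = List.replicate a false ++ List.replicate b true) ∨
    (∃ a b s, v = List.replicate a false ++ (List.replicate b true ++ (true :: false :: s))) := by
  induction v with
  | nil => exact Or.inl ⟨0, 0, rfl⟩
  | cons c t ih =>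
    cases c with
    | false =>
      rcases ih with ⟨a, b, rfl⟩ | ⟨a, b, s, rfl⟩
      · exact Or.inl ⟨a + 1, b, by rw [List.replicate_succ, List.cons_append]⟩
      · exact Or.inr ⟨a + 1, b, s, by rw [List.replicate_succ, List.cons_append]⟩
    | true =>
      rcases ih with ⟨a, b, rfl⟩ | ⟨a, b, s, rfl⟩
      · cases a with
        | zero => exact Or.inl ⟨0, b + 1, by simp [List.replicate_succ]⟩
        | succ a =>
          refine Or.inr ⟨0, 0, List.replicate a false ++ List.replicate b true, ?_⟩
          simp [List.replicate_succ]
      · cases a with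
        | zero =>
          refine Or.inr ⟨0, b + 1, s, ?_⟩
          simp [List.replicate_succ]
        | succ a =>
          refine Or.inr ⟨0, 0, List.replicate a false ++ (List.replicate b true ++ (true :: false :: s)), ?_⟩
          simp [List.replicate_succ]

lemma cat_append (p q : List Bool) (y : ℕ → Bool) :
    cat (p ++ q) y = cat p (cat q y) := by
  funext i
  simp only [cat, List.length_append]
  by_cases h1 : i < p.length
  · rw [dif_pos (by omega), dif_pos h1]
    simp [List.get_eq_getElem, List.getElem_append_left h1]
  · by_cases h2 : i < p.length + q.length
    · rw [dif_pos h2, dif_neg h1, dif_pos (by omega)]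
      simp only [List.get_eq_getElem]
      rw [List.getElem_append_right (by omega)]
    · rw [dif_neg h2, dif_neg h1, dif_neg (by omega)]
      congr 1
      omega

lemma rk_bound (v : List Bool) : rk v + 1 ≤ Nat.choose v.length (wt v) := by
  have := rkO_bound v.reverse
  simpa [rk, wt, List.count_reverse] using this

lemma regroup (a b : ℕ) (s : List Bool) :
    List.replicate a false ++ (List.replicate b true ++ (true :: false :: s))
      = (List.replicate a false ++ (List.replicate b true ++ [true, false])) ++ s := by
  simp

lemma rev1 (a b : ℕ) :
    (List.replicate a false ++ (List.replicate b true ++ [true, false])).reverse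
      = false :: true :: (List.replicate b true ++ List.replicate a false) := by
  simp

lemma rev2 (a b : ℕ) :
    (List.replicate b true ++ (List.replicate a false ++ [false, true])).reverse
      = true :: false :: (List.replicate a false ++ List.replicate b true) := by
  simp

lemma rkO_P1 (a b : ℕ) :
    rkO (false :: true :: (List.replicate b true ++ List.replicate a false)) 0 0 + 1
      = Nat.choose (a + b + 1) (b + 1) := by
  have hlen : (List.replicate b true ++ List.replicate a false).length = b + a := by simp
  have hwt : wt (List.replicate b true ++ List.replicate a false) = b := by
    rw [wt_append, wt_replicate_true, wt_replicate_false]; omega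
  have hb := rkO_block b a 0 0
  simp only [Nat.choose_zero_right, Nat.add_zero] at hb
  rw [rkO, rkO, hlen, hwt]
  have e : b + a + 0 = a + b := by omega
  have e2 : b + 0 + 1 = b + 1 := by omega
  rw [e, e2, pascal (a + b) b]
  omega

lemma rkO_P2 (a b : ℕ) :
    rkO (true :: false :: (List.replicate a false ++ List.replicate b true)) 0 0
      = Nat.choose (a + b + 1) (b + 1) := by
  have hlen : (false :: (List.replicate a false ++ List.replicate b true)).length = a + b + 1 := by
    simp
  have hwt : wt (false :: (List.replicate a false ++ List.replicate b true)) = b := by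
    rw [wt_cons_false, wt_append, wt_replicate_true, wt_replicate_false]; omega
  have hrest : rkO (false :: (List.replicate a false ++ List.replicate b true)) 0 0 = 0 := by
    rw [rkO, rkO_replicate_false]
    have hb := rkO_block b 0 0 0
    simp [Nat.choose_self] at hb
    omega
  rw [rkO, hrest, hlen, hwt]
  have e : a + b + 1 + 0 = a + b + 1 := by omega
  have e2 : b + 0 + 1 = b + 1 := by omega
  rw [e, e2]
  omega

lemma rk_append_prefix (P s : List Bool) :
    rk (P ++ s) = rkO s.reverse P.length (wt P) + rk P := by
  unfold rk
  rw [List.reverse_append, rkO_append]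
  have e1 : P.reverse.length + 0 = P.length := by simp
  have e2 : wt P.reverse + 0 = wt P := by simp [wt, List.count_reverse]
  rw [e1, e2]

lemma rk_succ (a b : ℕ) (s : List Bool) :
    rk ((List.replicate b true ++ (List.replicate a false ++ [false, true])) ++ s)
      = rk ((List.replicate a false ++ (List.replicate b true ++ [true, false])) ++ s) + 1 := by
  rw [rk_append_prefix (List.replicate b true ++ (List.replicate a false ++ [false, true])) s,
    rk_append_prefix (List.replicate a false ++ (List.replicate b true ++ [true, false])) s]
  have hL1 : (List.replicate a false ++ (List.replicate b true ++ [true, false])).length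
      = a + b + 2 := by simp; omega
  have hL2 : (List.replicate b true ++ (List.replicate a false ++ [false, true])).length
      = a + b + 2 := by simp; omega
  have hW1 : wt (List.replicate a false ++ (List.replicate b true ++ [true, false])) = b + 1 := by
    simp [wt, List.count_append, List.count_replicate]
  have hW2 : wt (List.replicate b true ++ (List.replicate a false ++ [false, true])) = b + 1 := by
    simp [wt, List.count_append, List.count_replicate]
  have hr1 : rk (List.replicate a false ++ (List.replicate b true ++ [true, false])) + 1
      = Nat.choose (a + b + 1) (b + 1) := by
    unfold rk
    rw [rev1]
    exact rkO_P1 a b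
  have hr2 : rk (List.replicate b true ++ (List.replicate a false ++ [false, true]))
      = Nat.choose (a + b + 1) (b + 1) := by
    unfold rk
    rw [rev2]
    exact rkO_P2 a b
  rw [hL1, hL2, hW1, hW2]
  omega

lemma T_step (T : (ℕ → Bool) → (ℕ → Bool)) (hT : PascalLaw T) (a b : ℕ)
    (s : List Bool) (y : ℕ → Bool) :
    T (cat ((List.replicate a false ++ (List.replicate b true ++ [true, false])) ++ s) y)
      = cat ((List.replicate b true ++ (List.replicate a false ++ [false, true])) ++ s) y := by
  rw [cat_append (List.replicate a false ++ (List.replicate b true ++ [true, false])) s y,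
    cat_append (List.replicate b true ++ (List.replicate a false ++ [false, true])) s y]
  rw [show List.replicate a false ++ (List.replicate b true ++ [true, false])
      = List.replicate a false ++ List.replicate b true ++ [true, false] from
      (List.append_assoc _ _ _).symm,
    show List.replicate b true ++ (List.replicate a false ++ [false, true])
      = List.replicate b true ++ List.replicate a false ++ [false, true] from
      (List.append_assoc _ _ _).symm]
  exact hT a b (cat s y)

lemma orbit_step (T : (ℕ → Bool) → (ℕ → Bool)) (hT : PascalLaw T) (v : List Bool)
    (y : ℕ → Bool) (hnm : rk v + 1 < Nat.choose v.length (wt v)) :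
    ∃ v', T (cat v y) = cat v' y ∧ v'.length = v.length ∧ wt v' = wt v ∧ rk v' = rk v + 1 := by
  rcases decomp v with ⟨a, b, rfl⟩ | ⟨a, b, s, rfl⟩
  · exfalso
    have hmax : rk (List.replicate a false ++ List.replicate b true) + 1
        = Nat.choose (a + b) b := by
      unfold rk
      rw [List.reverse_append, List.reverse_replicate, List.reverse_replicate]
      have hb := rkO_block b a 0 0
      simp only [Nat.choose_zero_right, Nat.add_zero] at hb
      omega
    have hL : (List.replicate a false ++ List.replicate b true).length = a + b := by simp
    have hW : wt (List.replicate a false ++ List.replicate b true) = b := by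
      rw [wt_append, wt_replicate_true, wt_replicate_false]; omega
    rw [hL, hW, ← hmax] at hnm
    omega
  · rw [regroup]
    refine ⟨(List.replicate b true ++ (List.replicate a false ++ [false, true])) ++ s,
      T_step T hT a b s y, ?_, ?_, rk_succ a b s⟩
    · simp; omega
    · simp [wt, List.count_append, List.count_replicate]

lemma orbit (T : (ℕ → Bool) → (ℕ → Bool)) (hT : PascalLaw T) (u0 : List Bool)
    (y : ℕ → Bool) :
    ∀ r : ℕ, rk u0 + r < Nat.choose u0.length (wt u0) →
    ∃ v, T^[r] (cat u0 y) = cat v y ∧ v.length = u0.length ∧ wt v = wt u0 ∧ rk v = rk u0 + r := by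
  intro r
  induction r with
  | zero => exact fun _ => ⟨u0, rfl, rfl, rfl, rfl⟩
  | succ r ih =>
    intro h
    obtain ⟨v, hv, hl, hw, hr⟩ := ih (by omega)
    obtain ⟨v', hv', hl', hw', hr'⟩ := orbit_step T hT v y (by rw [hl, hw]; omega)
    refine ⟨v', ?_, by omega, by rw [hw', hw], by omega⟩
    rw [Function.iterate_succ_apply', hv, hv']

end PF

open PF

/-- Return-time formula: if `w` is a word of length `n` with exactly `k` ones
and `x = w 0^l 1^m 1 0 x'`, then the first return time of `x` to the cylinder
`[w]` equals `C(n+l,k) + C(n+m,k+m) − C(n,k)`. -/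
theorem first_return_time (T : (ℕ → Bool) → (ℕ → Bool)) (hT : PascalLaw T)
    (w : List Bool) (n k : ℕ) (hn : w.length = n) (hk : w.count true = k)
    (l m : ℕ) (x' : ℕ → Bool)
    (x : ℕ → Bool)
    (hx : x = cat (w ++ List.replicate l false ++ List.replicate m true ++ [true, false]) x') :
    IsLeast {j : ℕ | 1 ≤ j ∧ ∀ i < n, (T^[j] x) i = w.getD i false}
      (Nat.choose (n + l) k + Nat.choose (n + m) (k + m) - Nat.choose n k) := by
  have hkn : k ≤ n := by rw [← hn, ← hk]; exact List.count_le_length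
  have hwk : wt w = k := hk
  -- suffix words
  set s1 : List Bool := List.replicate l false ++ List.replicate m true ++ [true, false] with hs1def
  set s2 : List Bool := List.replicate m true ++ List.replicate (l + 1) false ++ [true] with hs2def
  have hxu : x = cat (w ++ s1) x' := by
    rw [hx, hs1def]; simp
  -- reversed suffixes
  have hs1r : s1.reverse = false :: true :: (List.replicate m true ++ List.replicate l false) := by
    simp [hs1def]
  have hs2r : s2.reverse = true :: (List.replicate (l + 1) false ++ List.replicate m true) := by
    simp [hs2def]
  -- rank computations for the suffixes
  have hA1 : rkO s1.reverse n k + Nat.choose (n + l) k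
      = Nat.choose (n + l + m + 1) (k + m + 1) := by
    have hu_len : (List.replicate m true ++ List.replicate l false).length = m + l := by simp
    have hu_wt : wt (List.replicate m true ++ List.replicate l false) = m := by
      rw [wt_append, wt_replicate_true, wt_replicate_false]; omega
    have hb1 := rkO_block m l n k
    rw [hs1r, rkO, rkO, hu_len, hu_wt]
    have e1 : l + m + n = n + l + m := by omega
    have e2 : m + k = k + m := by omega
    rw [e1, e2] at hb1
    have e3 : m + l + n = n + l + m := by omega
    have e4 : m + k + 1 = k + m + 1 := by omega
    rw [e3, e4]
    have e5 : l + n = n + l := by omega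
    rw [e5] at hb1
    rw [pascal (n + l + m) (k + m)]
    omega
  have hA2 : rkO s2.reverse n k + Nat.choose n k
      = Nat.choose (n + l + m + 1) (k + m + 1) + Nat.choose (n + m) (k + m) := by
    have hu_len : (List.replicate (l + 1) false ++ List.replicate m true).length = l + 1 + m := by
      simp
    have hu_wt : wt (List.replicate (l + 1) false ++ List.replicate m true) = m := by
      rw [wt_append, wt_replicate_true, wt_replicate_false]; omega
    have hb2 := rkO_block m 0 n k
    simp only [List.replicate_zero, List.append_nil, Nat.zero_add, Nat.add_zero] at hb2
    rw [hs2r, rkO, rkO_replicate_false, hu_len, hu_wt]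
    have e1 : l + 1 + m + n = n + l + m + 1 := by omega
    have e2 : m + k + 1 = k + m + 1 := by omega
    rw [e1, e2]
    have e3 : m + n = n + m := by omega
    have e4 : m + k = k + m := by omega
    rw [e3, e4] at hb2
    omega
  -- rank of the starting and target words
  have hrk_u0 : rk (w ++ s1) = rkO s1.reverse n k + rk w := by
    rw [rk_append_prefix, hn, hwk]
  have hrk_t : rk (w ++ s2) = rkO s2.reverse n k + rk w := by
    rw [rk_append_prefix, hn, hwk]
  -- lengths and weights
  have hs1_len : s1.length = l + m + 2 := by simp [hs1def]; omega
  have hs2_len : s2.length = l + m + 2 := by simp [hs2def]; omega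
  have hs1_wt : wt s1 = m + 1 := by
    simp [hs1def, wt, List.count_append, List.count_replicate]
  have hs2_wt : wt s2 = m + 1 := by
    simp [hs2def, wt, List.count_append, List.count_replicate]
  have hu0_len : (w ++ s1).length = n + l + m + 2 := by
    rw [List.length_append, hn, hs1_len]; omega
  have ht_len : (w ++ s2).length = n + l + m + 2 := by
    rw [List.length_append, hn, hs2_len]; omega
  have hu0_wt : wt (w ++ s1) = k + m + 1 := by
    rw [wt_append, hs1_wt, hwk]; omega
  have ht_wt : wt (w ++ s2) = k + m + 1 := by
    rw [wt_append, hs2_wt, hwk]; omega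
  -- the return time
  set J : ℕ := Nat.choose (n + l) k + Nat.choose (n + m) (k + m) - Nat.choose n k with hJdef
  have hmono : Nat.choose n k ≤ Nat.choose (n + l) k :=
    Nat.choose_le_choose _ (by omega)
  have hpos2 : 0 < Nat.choose (n + m) (k + m) := Nat.choose_pos (by omega)
  have hJ1 : 1 ≤ J := by rw [hJdef]; omega
  have hJrel : rk (w ++ s2) = rk (w ++ s1) + J := by
    rw [hrk_u0, hrk_t, hJdef]; omega
  have hCb : rk (w ++ s2) + 1 ≤ Nat.choose (n + l + m + 2) (k + m + 1) := by
    have := rk_bound (w ++ s2)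
    rwa [ht_len, ht_wt] at this
  -- the orbit up to time J
  have horbit : ∀ r : ℕ, r ≤ J →
      ∃ v, T^[r] x = cat v x' ∧ v.length = n + l + m + 2 ∧ wt v = k + m + 1 ∧
        rk v = rk (w ++ s1) + r := by
    intro r hr
    obtain ⟨v, hv, h1, h2, h3⟩ := orbit T hT (w ++ s1) x' r (by
      rw [hu0_len, hu0_wt]; omega)
    exact ⟨v, by rw [hxu]; exact hv, by rw [h1, hu0_len], by rw [h2, hu0_wt], h3⟩
  constructor
  · -- J is in the set
    refine ⟨hJ1, ?_⟩
    obtain ⟨v, hv, h1, h2, h3⟩ := horbit J le_rfl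
    have hveq : v = w ++ s2 := by
      apply rk_inj
      · rw [h1, ht_len]
      · rw [h2, ht_wt]
      · rw [h3, hJrel]
    intro i hi
    rw [hv, hveq, cat]
    rw [dif_pos (show i < (w ++ s2).length by rw [ht_len]; omega)]
    simp only [List.get_eq_getElem]
    rw [List.getElem_append_left (show i < w.length by omega)]
    rw [List.getD_eq_getElem w false (show i < w.length by omega)]
  · -- lower bound
    rintro j ⟨hj1, hj2⟩
    by_contra hcon
    push_neg at hcon
    obtain ⟨v, hv, h1, h2, h3⟩ := horbit j (by omega)
    -- v starts with w
    have hvget : ∀ i, i < n → ∀ (hh : i < v.length), v[i] = w.getD i false := by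
      intro i hi hh
      have := hj2 i hi
      rw [hv, cat, dif_pos hh] at this
      simpa using this
    have htake : v.take n = w := by
      apply List.ext_getElem
      · rw [List.length_take, h1, hn]; omega
      · intro i hi1 hi2
        rw [List.getElem_take]
        rw [hvget i (by rwa [hn] at hi2) (by omega)]
        exact List.getD_eq_getElem w false hi2
    have hvsplit : v = w ++ v.drop n := by
      conv_lhs => rw [← List.take_append_drop n v]
      rw [htake]
    set z : List Bool := v.drop n with hzdef
    have hzl : z.length = l + m + 2 := by rw [hzdef, List.length_drop, h1]; omega
    have hzw : wt z = m + 1 := by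
      have h4 : wt v = wt w + wt z := by
        conv_lhs => rw [hvsplit]
        exact wt_append w z
      omega
    have hrkz : rkO z.reverse n k = rkO s1.reverse n k + j := by
      have h5 : rk v = rkO z.reverse n k + rk w := by
        conv_lhs => rw [hvsplit]
        rw [rk_append_prefix, hn, hwk]
      rw [h3, hrk_u0] at h5
      omega
    have hzrev_len : z.reverse.length = l + m + 2 := by rw [List.length_reverse, hzl]
    have hzrev_wt : wt z.reverse = m + 1 := by
      unfold wt; rw [List.count_reverse]; exact hzw
    rcases hzr : z.reverse with _ | ⟨c, t⟩
    · rw [hzr] at hzrev_len; simp at hzrev_len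
    · rw [hzr] at hzrev_len hzrev_wt hrkz
      have ht_len2 : t.length = l + m + 1 := by simpa using hzrev_len
      cases c with
      | false =>
        have htw : wt t = m + 1 := by rwa [wt_cons_false] at hzrev_wt
        have hub := rkO_ub t n k
        rw [ht_len2, htw] at hub
        have e : l + m + 1 - (m + 1) + n = n + l := by omega
        have e2 : l + m + 1 + n = n + l + m + 1 := by omega
        have e3 : m + 1 + k = k + m + 1 := by omega
        rw [e, e2, e3] at hub
        rw [rkO] at hrkz
        omega
      | true =>
        have htw : wt t = m := by rw [wt_cons_true] at hzrev_wt; omega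
        have hlb := rkO_lb t n k
        rw [htw] at hlb
        have e : m + n = n + m := by omega
        have e2 : m + k = k + m := by omega
        rw [e, e2] at hlb
        rw [rkO, ht_len2, htw] at hrkz
        have e3 : l + m + 1 + n = n + l + m + 1 := by omega
        have e4 : m + k + 1 = k + m + 1 := by omega
        rw [e3, e4] at hrkz
        omega
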